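/- arXiv:2204.05680 — 2 statements merged into one kernel-verified Lean document; each statement's English description precedes it below -/
import Mathlib

section
/- Let $W_t = \prod_{i=1}^t f_{\theta_i}(X_i)$ be a predictably mixed process built from a family $L_t^\theta = \prod_{i=1}^t f_\theta(X_i)$ of nonnegative processes, with a predictable sequence $(\theta_t)$ such that $\mathrm{Regret}_T := \max_{\theta\in\Theta}\{\log L_T^\theta - \log W_T\}$ satisfies $\mathrm{Regret}_T / T \to 0$ a.s. under a measure $Q$. If there exists $\theta' \in \Theta$ with $Q(\liminf_{T\to\infty} \frac{1}{T}\log L_T^{\theta'} > 0) = 1$, then $Q(\lim_{T\to\infty} \max_{0\le t\le T} W_t = \infty) = 1$; in particular, for any $\alpha \in (0,1]$, the stopping time $\tau = \inf\{t : W_t > 1/\alpha\}$ satisfies $Q(\tau < \infty) = 1$. -/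
open MeasureTheory Filter

/-! Pathwise, `log W_T / T ≥ log L_T^{θ'} / T - Regret_T / T`, whose liminf is positive, so
`log W_T ≥ c T` eventually for some `c > 0`; as `W_T ≥ log W_T`, the wealth tends to infinity,
hence so does its running maximum, and it crosses `1 / α` at a finite time. -/

lemma Real.isBoundedUnder_ge_of_pos_liminf {ι : Type*} {l : Filter ι} {u : ι → ℝ}
    (h : 0 < liminf u l) : l.IsBoundedUnder (· ≥ ·) u := by
  by_contra hu
  simp [Real.liminf_of_not_isBoundedUnder hu] at h

lemma Real.exists_pos_eventually_lt_of_pos_liminf {ι : Type*} {l : Filter ι} {u : ι → ℝ}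
    (h : 0 < liminf u l) : ∃ c > 0, ∀ᶠ i in l, c < u i :=
  ⟨liminf u l / 2, half_pos h,
    eventually_lt_of_lt_liminf (half_lt_self h) (Real.isBoundedUnder_ge_of_pos_liminf h)⟩

lemma tendsto_atTop_of_tendsto_log {ι : Type*} {l : Filter ι} {w : ι → ℝ} (hw : ∀ i, 0 ≤ w i)
    (h : Tendsto (fun i => Real.log (w i)) l atTop) : Tendsto w l atTop :=
  tendsto_atTop_mono (fun i => Real.log_le_self (hw i)) h

lemma eventually_mul_le_log_of_sublinear_regret {ℓ w r : ℕ → ℝ}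
    (hreg : ∀ T, Real.log (ℓ T) - Real.log (w T) ≤ r T)
    (hr : Tendsto (fun T : ℕ => r T / T) atTop (nhds 0))
    (hℓ : 0 < liminf (fun T : ℕ => Real.log (ℓ T) / T) atTop) :
    ∃ c > 0, ∀ᶠ T : ℕ in atTop, c * T ≤ Real.log (w T) := by
  obtain ⟨a, ha, hℓa⟩ := Real.exists_pos_eventually_lt_of_pos_liminf hℓ
  refine ⟨a / 2, half_pos ha, ?_⟩
  filter_upwards [hℓa, hr.eventually_lt_const (half_pos ha), eventually_gt_atTop 0]
    with T hℓT hrT hT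
  have hT' : (0 : ℝ) < T := Nat.cast_pos.mpr hT
  rw [lt_div_iff₀ hT'] at hℓT
  rw [div_lt_iff₀ hT'] at hrT
  linarith [hreg T]

lemma tendsto_atTop_of_sublinear_regret {ℓ w r : ℕ → ℝ} (hw : ∀ T, 0 ≤ w T)
    (hreg : ∀ T, Real.log (ℓ T) - Real.log (w T) ≤ r T)
    (hr : Tendsto (fun T : ℕ => r T / T) atTop (nhds 0))
    (hℓ : 0 < liminf (fun T : ℕ => Real.log (ℓ T) / T) atTop) :
    Tendsto w atTop atTop := by
  obtain ⟨c, hc, hlog⟩ := eventually_mul_le_log_of_sublinear_regret hreg hr hℓ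
  exact tendsto_atTop_of_tendsto_log hw
    (tendsto_atTop_mono' atTop hlog (tendsto_natCast_atTop_atTop.const_mul_atTop hc))

lemma tendsto_atTop_sup'_range {α : Type*} [SemilatticeSup α] {w : ℕ → α}
    (h : Tendsto w atTop atTop) :
    Tendsto (fun T => (Finset.range (T + 1)).sup' Finset.nonempty_range_add_one w)
      atTop atTop :=
  tendsto_atTop_mono (fun T => Finset.le_sup' w (Finset.self_mem_range_succ T)) h

lemma iInf_lt_top_of_tendsto_atTop {α : Type*} [Preorder α] [NoMaxOrder α] {w : ℕ → α}
    (h : Tendsto w atTop atTop) (b : α) : ⨅ (t : ℕ) (_ : b < w t), (t : ℕ∞) < ⊤ := by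
  obtain ⟨t, ht⟩ := (h.eventually_gt_atTop b).exists
  exact (iInf₂_le t ht).trans_lt (ENat.natCast_lt_top t)

theorem sublinear_regret_asymptotic_power_general
    {Ω : Type*} {m0 : MeasurableSpace Ω} {Q : Measure Ω} [IsProbabilityMeasure Q]
    {𝒳 : Type*} {Θ : Type*}
    (X : ℕ → Ω → 𝒳)
    (f : Θ → 𝒳 → ℝ) (hf : ∀ θ x, 0 ≤ f θ x)
    (θseq : ℕ → Ω → Θ)
    (L : Θ → ℕ → Ω → ℝ)
    (W : ℕ → Ω → ℝ)
    (hW : ∀ t ω, W t ω = ∏ i ∈ Finset.range t, f (θseq (i + 1) ω) (X (i + 1) ω))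
    (R : ℕ → Ω → ℝ)
    (hR : ∀ (T : ℕ) (ω : Ω) (θ : Θ), Real.log (L θ T ω) - Real.log (W T ω) ≤ R T ω)
    (hRsub : ∀ᵐ ω ∂Q,
      Filter.Tendsto (fun T : ℕ => R T ω / (T : ℝ)) Filter.atTop (nhds 0))
    (θ' : Θ)
    (hθ' : ∀ᵐ ω ∂Q,
      0 < Filter.liminf (fun T : ℕ => Real.log (L θ' T ω) / (T : ℝ)) Filter.atTop)
    (α : ℝ)
    (τ : Ω → ℕ∞)
    (hτ : ∀ ω, τ ω = ⨅ (t : ℕ) (_ : 1 / α < W t ω), (t : ℕ∞)) :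
    (∀ᵐ ω ∂Q,
      Filter.Tendsto
        (fun T : ℕ =>
          (Finset.range (T + 1)).sup' Finset.nonempty_range_add_one (fun t => W t ω))
        Filter.atTop Filter.atTop) ∧
    Q {ω | τ ω < ⊤} = 1 := by
  have hW_nonneg : ∀ T ω, 0 ≤ W T ω := fun T ω =>
    (hW T ω).symm ▸ Finset.prod_nonneg fun _ _ => hf _ _
  have hW_top : ∀ᵐ ω ∂Q, Tendsto (fun T => W T ω) atTop atTop := by
    filter_upwards [hRsub, hθ'] with ω hRω hLω
    exact tendsto_atTop_of_sublinear_regret (hW_nonneg · ω) (hR · ω θ') hRω hLω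
  refine ⟨hW_top.mono fun ω => tendsto_atTop_sup'_range, ?_⟩
  have hτ_fin : ∀ᵐ ω ∂Q, τ ω < ⊤ := hW_top.mono fun ω hω =>
    (hτ ω).symm ▸ iInf_lt_top_of_tendsto_atTop hω (1 / α)
  exact (measure_congr (eventuallyEq_univ.mpr hτ_fin)).trans measure_univ

/-- Sublinear regret implies asymptotic power one: if the regret of a
predictably mixed wealth process is `o(T)` a.s. and some base process has
strictly positive asymptotic growth rate a.s., then the wealth tends to
infinity a.s. and the induced test eventually rejects with probability one. -/
theorem sublinear_regret_asymptotic_power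
    {Ω : Type*} {m0 : MeasurableSpace Ω} {Q : Measure Ω} [IsProbabilityMeasure Q]
    {𝒳 : Type*} {Θ : Type*}
    (X : ℕ → Ω → 𝒳)
    (f : Θ → 𝒳 → ℝ) (hf : ∀ θ x, 0 ≤ f θ x)
    (θseq : ℕ → Ω → Θ)
    (L : Θ → ℕ → Ω → ℝ)
    (hL : ∀ θ t ω, L θ t ω = ∏ i ∈ Finset.range t, f θ (X (i + 1) ω))
    (W : ℕ → Ω → ℝ)
    (hW : ∀ t ω, W t ω = ∏ i ∈ Finset.range t, f (θseq (i + 1) ω) (X (i + 1) ω))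
    (R : ℕ → Ω → ℝ)
    (hR : ∀ (T : ℕ) (ω : Ω) (θ : Θ), Real.log (L θ T ω) - Real.log (W T ω) ≤ R T ω)
    (hRsub : ∀ᵐ ω ∂Q,
      Filter.Tendsto (fun T : ℕ => R T ω / (T : ℝ)) Filter.atTop (nhds 0))
    (θ' : Θ)
    (hθ' : ∀ᵐ ω ∂Q,
      0 < Filter.liminf (fun T : ℕ => Real.log (L θ' T ω) / (T : ℝ)) Filter.atTop)
    (α : ℝ) (hα : α ∈ Set.Ioc (0 : ℝ) 1)
    (τ : Ω → ℕ∞)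
    (hτ : ∀ ω, τ ω = ⨅ (t : ℕ) (_ : 1 / α < W t ω), (t : ℕ∞)) :
    (∀ᵐ ω ∂Q,
      Filter.Tendsto
        (fun T : ℕ =>
          (Finset.range (T + 1)).sup' Finset.nonempty_range_add_one (fun t => W t ω))
        Filter.atTop Filter.atTop) ∧
    Q {ω | τ ω < ⊤} = 1 :=
  sublinear_regret_asymptotic_power_general (m0 := m0) X f hf θseq L W hW R hR hRsub θ' hθ' α τ hτ
end

section
/- Suppose $s$ is convex in its first argument and $m(\lambda_0, x) \in \partial_\lambda s(\lambda_0, x)$ is a subgradient. Then for all $\lambda, \lambda_0$ and all $x_1, \ldots, x_t$ with $s(\lambda_0, x_i) - s(\lambda, x_i) > -1$: $0 < \prod_{i=1}^t (1 + s(\lambda_0, x_i) - s(\lambda, x_i)) \le \prod_{i=1}^t (1 + \langle \lambda_0 - \lambda, m(\lambda_0, x_i)\rangle)$. In particular the identifiable test martingale with $\eta = \lambda_0 - \lambda$ dominates the corresponding elicitable test supermartingale pointwise. -/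
open Set

theorem sub_le_inner_of_le_add_inner {E : Type*} [NormedAddCommGroup E] [InnerProductSpace ℝ E]
    {a b : ℝ} {g l₀ l : E} (h : a + inner ℝ g (l - l₀) ≤ b) : a - b ≤ inner ℝ (l₀ - l) g := by
  have hflip : inner ℝ (l₀ - l) g = -inner ℝ g (l - l₀) := by
    rw [real_inner_comm, ← inner_neg_right, neg_sub]
  linarith

theorem identifiable_dominates_elicitable_general
    {k : ℕ} {𝒳 : Type*}
    (Λ : Set (EuclideanSpace ℝ (Fin k)))
    (s : EuclideanSpace ℝ (Fin k) → 𝒳 → ℝ)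
    (m : 𝒳 → EuclideanSpace ℝ (Fin k))
    (lam0 : EuclideanSpace ℝ (Fin k))
    (hsubgrad : ∀ x : 𝒳, ∀ l ∈ Λ, s lam0 x + (inner ℝ (m x) (l - lam0) : ℝ) ≤ s l x)
    (l : EuclideanSpace ℝ (Fin k)) (hl : l ∈ Λ)
    (t : ℕ) (x : Fin t → 𝒳)
    (hbd : ∀ i : Fin t, -1 < s lam0 (x i) - s l (x i)) :
    0 < ∏ i : Fin t, (1 + s lam0 (x i) - s l (x i)) ∧
    ∏ i : Fin t, (1 + s lam0 (x i) - s l (x i)) ≤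
      ∏ i : Fin t, (1 + (inner ℝ (lam0 - l) (m (x i)) : ℝ)) := by
  have hpos : ∀ i ∈ Finset.univ, 0 < 1 + s lam0 (x i) - s l (x i) := fun i _ => by
    linarith [hbd i]
  have hterm : ∀ i ∈ Finset.univ,
      1 + s lam0 (x i) - s l (x i) ≤ 1 + (inner ℝ (lam0 - l) (m (x i)) : ℝ) := fun i _ => by
    linarith [sub_le_inner_of_le_add_inner (hsubgrad (x i) l hl)]
  exact ⟨Finset.prod_pos hpos, Finset.prod_le_prod (fun i hi => (hpos i hi).le) hterm⟩

/-- Identifiable test martingales dominate elicitable test supermartingales: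
the subgradient inequality implies the termwise and product inequality. -/
theorem identifiable_dominates_elicitable
    {k : ℕ} {𝒳 : Type*}
    (Λ : Set (EuclideanSpace ℝ (Fin k))) (hΛ : Convex ℝ Λ)
    (s : EuclideanSpace ℝ (Fin k) → 𝒳 → ℝ)
    (hconv : ∀ x : 𝒳, ConvexOn ℝ Λ (fun l => s l x))
    (m : 𝒳 → EuclideanSpace ℝ (Fin k))
    (lam0 : EuclideanSpace ℝ (Fin k)) (hlam0 : lam0 ∈ Λ)
    (hsubgrad : ∀ x : 𝒳, ∀ l ∈ Λ, s lam0 x + (inner ℝ (m x) (l - lam0) : ℝ) ≤ s l x)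
    (l : EuclideanSpace ℝ (Fin k)) (hl : l ∈ Λ)
    (t : ℕ) (x : Fin t → 𝒳)
    (hbd : ∀ i : Fin t, -1 < s lam0 (x i) - s l (x i)) :
    0 < ∏ i : Fin t, (1 + s lam0 (x i) - s l (x i)) ∧
    ∏ i : Fin t, (1 + s lam0 (x i) - s l (x i)) ≤
      ∏ i : Fin t, (1 + (inner ℝ (lam0 - l) (m (x i)) : ℝ)) :=
  identifiable_dominates_elicitable_general Λ s m lam0 hsubgrad l hl t x hbd
end
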